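/- Let S = {s₁,…,sₙ} be a factor-closed set of distinct positive integers. Then the determinant of the GCD matrix T with T_{ij} = gcd(s_i, s_j) equals ∏_{i=1}^{n} φ(s_i). -/

import Mathlib

/-!
Let `E` be the 0/1 matrix with `E i k = 1` iff `s k ∣ s i`. Then
`(E * diagonal (φ ∘ s) * Eᵀ) i j = ∑ φ (s k)` over the `s k` dividing `gcd (s i) (s j)`, and by
factor-closedness these are all divisors of the gcd, so Gauss's identity `∑_{d ∣ m} φ d = m`
turns the product into the GCD matrix. Listing `S` in increasing order makes `E` lower
unitriangular, so `det E = 1`.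
-/

open Finset Matrix

def divisibilityMatrix {ι : Type*} (R : Type*) [Zero R] [One R] (s : ι → ℕ) : Matrix ι ι R :=
  of fun i k => if s k ∣ s i then 1 else 0

variable {ι R : Type*} [Fintype ι] [CommRing R]

theorem det_divisibilityMatrix {n : ℕ} (s : Fin n → ℕ) (hs : ∀ i, 0 < s i)
    (hinj : Function.Injective s) : (divisibilityMatrix R s).det = 1 := by
  let σ := Tuple.sort s
  have hmono : StrictMono (s ∘ σ) :=
    (Tuple.monotone_sort s).strictMono_of_injective (hinj.comp σ.injective)
  have htri : ((divisibilityMatrix R s).submatrix σ σ).IsLowerTriangular := by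
    intro i j hij
    simp only [submatrix_apply, divisibilityMatrix, of_apply, ite_eq_right_iff]
    exact fun hdvd => absurd (Nat.le_of_dvd (hs _) hdvd) (hmono hij).not_ge
  rw [← det_submatrix_equiv_self σ, det_of_isLowerTriangular _ htri]
  exact prod_eq_one fun i _ => by simp [divisibilityMatrix]

theorem divisibilityMatrix_mul_diagonal_mul_transpose_apply [DecidableEq ι] (s : ι → ℕ)
    (f : ι → R) (i j : ι) :
    (divisibilityMatrix R s * diagonal f * (divisibilityMatrix R s)ᵀ) i j
      = ∑ k ∈ univ.filter (fun k => s k ∣ Nat.gcd (s i) (s j)), f k := by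
  rw [mul_apply, sum_filter]
  refine sum_congr rfl fun k _ => ?_
  rw [mul_diagonal, transpose_apply]
  simp only [divisibilityMatrix, of_apply, Nat.dvd_gcd_iff, ite_and, ite_mul, one_mul, zero_mul,
    mul_ite, mul_one, mul_zero]
  split_ifs <;> rfl

theorem sum_totient_filter_dvd (s : ι → ℕ) (hinj : Function.Injective s) {m : ℕ} (hm : m ≠ 0)
    (hcl : ∀ d, d ∣ m → d ∈ Set.range s) :
    ∑ k ∈ univ.filter (fun k => s k ∣ m), Nat.totient (s k) = m := by
  have himage : (univ.filter fun k => s k ∣ m).image s = m.divisors := by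
    ext d
    simp only [mem_image, mem_filter, mem_univ, true_and, Nat.mem_divisors, hm, ne_eq,
      not_false_eq_true, and_true]
    exact ⟨by rintro ⟨k, hk, rfl⟩; exact hk,
      fun hd => by obtain ⟨k, rfl⟩ := hcl d hd; exact ⟨k, hd, rfl⟩⟩
  rw [← sum_image hinj.injOn, himage, Nat.sum_totient]

theorem gcd_matrix_det_factor_closed (n : ℕ) (s : Fin n → ℕ)
    (hs : ∀ i, 0 < s i) (hsinj : Function.Injective s)
    (hfc : ∀ i d, 0 < d → d ∣ s i → ∃ j, s j = d) :
    (Matrix.of fun i j : Fin n => (Nat.gcd (s i) (s j) : ℝ)).det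
      = ∏ i, (Nat.totient (s i) : ℝ) := by
  have hfactor : (Matrix.of fun i j : Fin n => (Nat.gcd (s i) (s j) : ℝ))
      = divisibilityMatrix ℝ s * diagonal (fun k => (Nat.totient (s k) : ℝ))
        * (divisibilityMatrix ℝ s)ᵀ := by
    ext i j
    have hgcd : Nat.gcd (s i) (s j) ≠ 0 := Nat.gcd_ne_zero_left (hs i).ne'
    have hcl (d : ℕ) (hd : d ∣ Nat.gcd (s i) (s j)) : d ∈ Set.range s :=
      hfc i d (Nat.pos_of_dvd_of_pos hd (Nat.pos_of_ne_zero hgcd))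
        (hd.trans (Nat.gcd_dvd_left _ _))
    rw [divisibilityMatrix_mul_diagonal_mul_transpose_apply, of_apply, ← Nat.cast_sum,
      sum_totient_filter_dvd s hsinj hgcd hcl]
  rw [hfactor, det_mul, det_mul, det_transpose, det_divisibilityMatrix s hs hsinj, det_diagonal,
    one_mul, mul_one]
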